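/- arXiv:2110.11324 — 2 statements merged into one kernel-verified Lean document; each statement's English description precedes it below -/
import Mathlib

section
/- Let p₁, p₂, p₃ ∈ ℝ² and let q ∈ ℝ² be a point with q ≠ pᵢ for each i, which minimizes the function x ↦ |x - p₁| + |x - p₂| + |x - p₃|. Then the three unit vectors uᵢ = (pᵢ - q)/|pᵢ - q| satisfy u₁ + u₂ + u₃ = 0; consequently the inner product ⟨uᵢ, uⱼ⟩ = -1/2 for i ≠ j, i.e., the segments from q to the three points meet pairwise at angles of 120 degrees. -/
/-!
Away from the points `pᵢ`, the sum of distances is differentiable with gradient `-∑ uᵢ`,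
which vanishes at a minimizer. Three unit vectors with zero sum have pairwise inner
products `-1/2`, because `1 = ‖u₃‖² = ‖u₁ + u₂‖² = 2 + 2⟪u₁, u₂⟫`.
-/

open scoped RealInnerProductSpace

section

variable {E : Type*} [NormedAddCommGroup E] [InnerProductSpace ℝ E]

theorem hasFDerivAt_norm_of_ne_zero {z : E} (hz : z ≠ 0) :
    HasFDerivAt (‖·‖) (innerSL ℝ (‖z‖⁻¹ • z)) z := by
  have hsqrt :=
    (hasStrictFDerivAt_norm_sq z).hasFDerivAt.sqrt (pow_ne_zero 2 (norm_ne_zero_iff.2 hz))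
  simp only [Real.sqrt_sq (norm_nonneg _)] at hsqrt
  refine hsqrt.congr_fderiv ?_
  rw [map_smul, ← ofNat_smul_eq_nsmul ℝ, smul_smul]
  congr 1
  field_simp

theorem hasFDerivAt_dist_of_ne {x p : E} (hx : x ≠ p) :
    HasFDerivAt (dist · p) (innerSL ℝ (‖x - p‖⁻¹ • (x - p))) x := by
  simpa [Function.comp_def, dist_eq_norm] using
    (hasFDerivAt_norm_of_ne_zero (sub_ne_zero.2 hx)).comp x ((hasFDerivAt_id x).sub_const p)

theorem sum_inv_norm_smul_sub_eq_zero_of_isLocalMin {ι : Type*} [Fintype ι] {p : ι → E} {q : E}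
    (hq : ∀ i, q ≠ p i) (hmin : IsLocalMin (fun x ↦ ∑ i, dist x (p i)) q) :
    ∑ i, ‖p i - q‖⁻¹ • (p i - q) = 0 := by
  have hderiv : HasFDerivAt (fun x ↦ ∑ i, dist x (p i))
      (innerSL ℝ (∑ i, ‖q - p i‖⁻¹ • (q - p i))) q := by
    rw [map_sum]
    exact HasFDerivAt.fun_sum fun i _ ↦ hasFDerivAt_dist_of_ne (hq i)
  have hcrit : ∑ i, ‖q - p i‖⁻¹ • (q - p i) = 0 := by
    rw [← norm_eq_zero, ← innerSL_apply_norm ℝ, hmin.hasFDerivAt_eq_zero hderiv, norm_zero]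
  simpa only [← neg_sub q, norm_neg, smul_neg, Finset.sum_neg_distrib, neg_eq_zero] using hcrit

theorem inner_eq_neg_half_of_add_add_eq_zero {a b c : E} (habc : a + b + c = 0)
    (ha : ‖a‖ = 1) (hb : ‖b‖ = 1) (hc : ‖c‖ = 1) : ⟪a, b⟫ = -(1 / 2) := by
  have hab : ‖a + b‖ = 1 := by rw [← norm_neg, ← eq_neg_of_add_eq_zero_right habc, hc]
  have := norm_add_sq_real a b
  rw [hab, ha, hb] at this
  linarith

end

/-- At a Fermat/Steiner point `q` (distinct from the three given points) minimizing the
sum of distances to `p₁, p₂, p₃` in the plane, the three unit vectors pointing from `q`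
to the `pᵢ` sum to zero, and hence meet pairwise at angles of 120 degrees. -/
theorem fermat_point_120_degrees (p₁ p₂ p₃ q : EuclideanSpace ℝ (Fin 2))
    (h1 : q ≠ p₁) (h2 : q ≠ p₂) (h3 : q ≠ p₃)
    (hmin : ∀ x, dist q p₁ + dist q p₂ + dist q p₃ ≤ dist x p₁ + dist x p₂ + dist x p₃) :
    let u₁ := ‖p₁ - q‖⁻¹ • (p₁ - q)
    let u₂ := ‖p₂ - q‖⁻¹ • (p₂ - q)
    let u₃ := ‖p₃ - q‖⁻¹ • (p₃ - q)
    u₁ + u₂ + u₃ = 0 ∧ (inner ℝ u₁ u₂ : ℝ) = -(1/2) ∧ (inner ℝ u₁ u₃ : ℝ) = -(1/2) ∧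
      (inner ℝ u₂ u₃ : ℝ) = -(1/2) := by
  intro u₁ u₂ u₃
  have hsum : u₁ + u₂ + u₃ = 0 := by
    have := sum_inv_norm_smul_sub_eq_zero_of_isLocalMin (p := ![p₁, p₂, p₃]) (q := q)
      (by simp [Fin.forall_fin_succ, h1, h2, h3])
      (.of_forall fun x ↦ by simpa [Fin.sum_univ_three] using hmin x)
    simpa [Fin.sum_univ_three] using this
  have hu₁ : ‖u₁‖ = 1 := norm_smul_inv_norm (sub_ne_zero.2 h1.symm)
  have hu₂ : ‖u₂‖ = 1 := norm_smul_inv_norm (sub_ne_zero.2 h2.symm)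
  have hu₃ : ‖u₃‖ = 1 := norm_smul_inv_norm (sub_ne_zero.2 h3.symm)
  refine ⟨hsum, inner_eq_neg_half_of_add_add_eq_zero hsum hu₁ hu₂ hu₃,
    inner_eq_neg_half_of_add_add_eq_zero ?_ hu₁ hu₃ hu₂,
    inner_eq_neg_half_of_add_add_eq_zero ?_ hu₂ hu₃ hu₁⟩ <;>
  rw [← hsum] <;> abel
end

section
/- Let ω be the standard Kähler (symplectic) form on ℂⁿ ≅ ℝ²ⁿ, given by ω = Σᵢ dxᵢ ∧ dyᵢ. Then for any two vectors v, w ∈ ℝ²ⁿ one has |ω(v,w)| ≤ |v||w|, and more precisely |ω(v,w)| ≤ |v ∧ w| (the area of the parallelogram spanned by v and w), with equality |ω(v,w)| = |v ∧ w| if and only if the plane spanned by v and w is a complex line (i.e., invariant under multiplication by i). -/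
/-!
Write `⟪v, w⟫ = a + b i`. Then `b² = |⟪v, w⟫|² - a²`, so the bound `|b| ≤ √(‖v‖²‖w‖² - a²)` is
Cauchy–Schwarz in disguise, and equality holds exactly in its equality case `w ∈ ℂ v`.
For `ℝ`-independent `v, w = r v` we have `Im r ≠ 0`, so `1, r` span `ℂ` over `ℝ` and
`span_ℝ {v, w} = ℂ v` is a complex line; conversely `i v ∈ span_ℝ {v, w}` forces `w ∈ ℂ v`.
-/

open Complex Submodule

namespace Complex

theorem abs_im_eq_sqrt_sq_norm_sub_sq_re (z : ℂ) : |z.im| = √(‖z‖ ^ 2 - z.re ^ 2) := by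
  rw [sq_norm_sub_sq_re, Real.sqrt_sq_eq_abs]

theorem abs_im_le_sqrt_sq_sub_sq_re {z : ℂ} {p : ℝ} (h : ‖z‖ ≤ p) :
    |z.im| ≤ √(p ^ 2 - z.re ^ 2) := by
  rw [abs_im_eq_sqrt_sq_norm_sub_sq_re]
  gcongr

theorem abs_im_eq_sqrt_sq_sub_sq_re_iff {z : ℂ} {p : ℝ} (h : ‖z‖ ≤ p) :
    |z.im| = √(p ^ 2 - z.re ^ 2) ↔ ‖z‖ = p := by
  have hz : 0 ≤ ‖z‖ ^ 2 - z.re ^ 2 := by rw [sq_norm_sub_sq_re]; positivity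
  have hzp : ‖z‖ ^ 2 ≤ p ^ 2 := by gcongr
  rw [abs_im_eq_sqrt_sq_norm_sub_sq_re, Real.sqrt_inj hz (by linarith), sub_left_inj,
    sq_eq_sq₀ (norm_nonneg z) ((norm_nonneg z).trans h)]

theorem exists_ofReal_add_ofReal_mul_eq {c : ℂ} (hc : c.im ≠ 0) (d : ℂ) :
    ∃ α β : ℝ, (α : ℂ) + β * c = d := by
  refine ⟨d.re - d.im / c.im * c.re, d.im / c.im, Complex.ext ?_ ?_⟩ <;>
    simp [hc]

end Complex

section

variable {E : Type*} [AddCommGroup E] [Module ℂ E] [Module ℝ E] [IsScalarTower ℝ ℂ E]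

theorem ofReal_smul_eq_smul (t : ℝ) (x : E) : (t : ℂ) • x = t • x :=
  algebraMap_smul ℂ t x

theorem span_real_pair_smul_eq_restrictScalars_span {v : E} {r : ℂ} (hr : r.im ≠ 0) :
    span ℝ {v, r • v} = (ℂ ∙ v).restrictScalars ℝ := by
  ext z
  simp only [mem_span_pair, restrictScalars_mem, mem_span_singleton,
    ← ofReal_smul_eq_smul, smul_smul, ← add_smul]
  constructor
  · rintro ⟨s, t, rfl⟩
    exact ⟨_, rfl⟩
  · rintro ⟨d, rfl⟩
    obtain ⟨α, β, hd⟩ := exists_ofReal_add_ofReal_mul_eq hr d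
    exact ⟨α, β, by rw [hd]⟩

theorem forall_I_smul_mem_span_pair_iff {v w : E} (hvw : LinearIndependent ℝ ![v, w]) :
    (∀ z ∈ span ℝ {v, w}, I • z ∈ span ℝ {v, w}) ↔ w ∈ ℂ ∙ v := by
  have hv : v ≠ 0 := by simpa using hvw.ne_zero 0
  constructor
  · intro hI
    obtain ⟨s, t, hst⟩ := mem_span_pair.mp (hI v (subset_span (by simp)))
    have ht : (t : ℂ) ≠ 0 := by
      intro ht
      rw [ofReal_eq_zero.mp ht, zero_smul, add_zero, ← ofReal_smul_eq_smul, ← sub_eq_zero,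
        ← sub_smul, smul_eq_zero] at hst
      exact hst.elim (fun h => by simpa using congrArg im h) hv
    rw [← smul_mem_iff _ ht, ofReal_smul_eq_smul, eq_sub_of_add_eq' hst]
    exact sub_mem (smul_mem _ _ (mem_span_singleton_self v))
      (smul_of_tower_mem _ _ (mem_span_singleton_self v))
  · intro hw
    obtain ⟨r, rfl⟩ := mem_span_singleton.mp hw
    have hr : r.im ≠ 0 := by
      intro hr
      refine (LinearIndependent.pair_iff' hv).mp hvw r.re ?_
      rw [← ofReal_smul_eq_smul, show (r.re : ℂ) = r from ext rfl (by simp [hr])]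
    rw [span_real_pair_smul_eq_restrictScalars_span hr]
    exact fun z hz => smul_mem _ I hz

end

/-- Wirtinger's inequality: for the standard Kähler form `ω(v,w) = Im ⟪v,w⟫` on `ℂⁿ`,
one has `|ω(v,w)| ≤ |v||w|` and `|ω(v,w)| ≤ |v ∧ w|`, where
`|v ∧ w| = √(|v|²|w|² - ⟨v,w⟩²)` is the area of the parallelogram spanned by `v, w`
(with `⟨v,w⟩ = Re ⟪v,w⟫` the real inner product); moreover, if `v, w` are linearly
independent over `ℝ`, equality `|ω(v,w)| = |v ∧ w|` holds if and only if the real plane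
spanned by `v` and `w` is a complex line, i.e. invariant under multiplication by `i`. -/
theorem wirtinger_inequality (n : ℕ) (v w : EuclideanSpace ℂ (Fin n)) :
    |(inner ℂ v w : ℂ).im| ≤ ‖v‖ * ‖w‖ ∧
    |(inner ℂ v w : ℂ).im| ≤ Real.sqrt (‖v‖ ^ 2 * ‖w‖ ^ 2 - ((inner ℂ v w : ℂ).re) ^ 2) ∧
    (LinearIndependent ℝ ![v, w] →
      (|(inner ℂ v w : ℂ).im| = Real.sqrt (‖v‖ ^ 2 * ‖w‖ ^ 2 - ((inner ℂ v w : ℂ).re) ^ 2) ↔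
        ∀ z ∈ Submodule.span ℝ ({v, w} : Set (EuclideanSpace ℂ (Fin n))),
          (Complex.I : ℂ) • z ∈ Submodule.span ℝ ({v, w} : Set (EuclideanSpace ℂ (Fin n))))) := by
  have hCS : ‖inner ℂ v w‖ ≤ ‖v‖ * ‖w‖ := norm_inner_le_norm v w
  rw [← mul_pow]
  refine ⟨(abs_im_le_norm _).trans hCS, abs_im_le_sqrt_sq_sub_sq_re hCS, fun hvw => ?_⟩
  have hv : v ≠ 0 := by simpa using hvw.ne_zero 0
  have hCS_eq : ‖inner ℂ v w‖ = ‖v‖ * ‖w‖ ↔ v = 0 ∨ w ∈ ℂ ∙ v :=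
    (norm_inner_eq_norm_tfae ℂ v w).out 0 3
  rw [abs_im_eq_sqrt_sq_sub_sq_re_iff hCS, hCS_eq, or_iff_right hv,
    forall_I_smul_mem_span_pair_iff hvw]
end
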